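/- arXiv:1804.10407 — 2 statements merged into one kernel-verified Lean document; each statement's English description precedes it below -/
import Mathlib

section
/- If A ∈ ℂ^{n×n} is half-radial (‖A‖ = 2·r(A)), then the multiplicity of the zero singular value of A is at least the multiplicity of the maximum singular value σ_max. -/
open scoped InnerProductSpace

noncomputable def toCLM {n : ℕ} (A : Matrix (Fin n) (Fin n) ℂ) :
    EuclideanSpace ℂ (Fin n) →L[ℂ] EuclideanSpace ℂ (Fin n) :=
  Matrix.toEuclideanCLM (𝕜 := ℂ) A

noncomputable def opNorm {n : ℕ} (A : Matrix (Fin n) (Fin n) ℂ) : ℝ := ‖toCLM A‖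

noncomputable def numRadius {n : ℕ} (A : Matrix (Fin n) (Fin n) ℂ) : ℝ :=
  sSup {r : ℝ | ∃ z : EuclideanSpace ℂ (Fin n), ‖z‖ = 1 ∧ r = ‖(⟪z, toCLM A z⟫_ℂ)‖}

/-
If `w` bounds the numerical radius of `T`, then the self-adjoint operators `T + T†` and
`i (T - T†)` have norm at most `2w`. For a vector `x` with `‖T x‖ = 2w ‖x‖`, the parallelogram law
gives `2 (‖T x‖² + ‖T† x‖²) = ‖(T + T†) x‖² + ‖(T - T†) x‖² ≤ 8 w² ‖x‖² = 2 ‖T x‖²`, so `T† x = 0`.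
Hence for a half-radial matrix the maximal right singular subspace lies in `ker A† = (range A)ᗮ`,
whose dimension equals that of `ker A`.
-/

open scoped InnerProduct
open ContinuousLinearMap Module

section HalfRadial

variable {E : Type*} [NormedAddCommGroup E] [InnerProductSpace ℂ E] [CompleteSpace E]

theorem norm_add_adjoint_le (T : E →L[ℂ] E) {w : ℝ} (hw0 : 0 ≤ w)
    (hw : ∀ z, ‖⟪z, T z⟫_ℂ‖ ≤ w * ‖z‖ ^ 2) : ‖T + T†‖ ≤ 2 * w := by
  have hsym : (T + T†).IsSymmetric := (IsSelfAdjoint.add_star_self T).isSymmetric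
  rw [norm_eq_iSup_rayleighQuotient _ hsym]
  refine ciSup_le fun x => ?_
  have hre : reApplyInnerSelf (T + T†) x = 2 * (⟪x, T x⟫_ℂ).re := by
    rw [reApplyInnerSelf_apply, add_apply, inner_add_left, adjoint_inner_left, ← inner_conj_symm x]
    simp only [Complex.add_re, Complex.conj_re, RCLike.re_to_complex]
    ring
  rw [rayleighQuotient, hre, abs_div, abs_sq, abs_mul, abs_two]
  rcases eq_or_ne x 0 with rfl | hx
  · simpa using hw0
  rw [div_le_iff₀ (by positivity), mul_assoc]
  gcongr
  exact (Complex.abs_re_le_norm _).trans (hw x)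

theorem norm_apply_add_adjoint_apply_le (T : E →L[ℂ] E) {w : ℝ} (hw0 : 0 ≤ w)
    (hw : ∀ z, ‖⟪z, T z⟫_ℂ‖ ≤ w * ‖z‖ ^ 2) (x : E) : ‖T x + (T†) x‖ ≤ 2 * w * ‖x‖ :=
  calc ‖T x + (T†) x‖ = ‖(T + T†) x‖ := rfl
    _ ≤ ‖T + T†‖ * ‖x‖ := le_opNorm _ x
    _ ≤ 2 * w * ‖x‖ := by gcongr; exact norm_add_adjoint_le T hw0 hw

theorem adjoint_apply_eq_zero_of_norm_apply_eq (T : E →L[ℂ] E) {w : ℝ}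
    (hw : ∀ z, ‖⟪z, T z⟫_ℂ‖ ≤ w * ‖z‖ ^ 2) {x : E} (hx : ‖T x‖ = 2 * w * ‖x‖) : (T†) x = 0 := by
  rcases eq_or_ne x 0 with rfl | hx0
  · exact map_zero _
  have hw0 : 0 ≤ w := by
    have : 0 ≤ 2 * w * ‖x‖ := hx ▸ norm_nonneg _
    nlinarith [norm_pos_iff.mpr hx0]
  have hadd := norm_apply_add_adjoint_apply_le T hw0 hw x
  have hsub : ‖T x - (T†) x‖ ≤ 2 * w * ‖x‖ := by
    have h := norm_apply_add_adjoint_apply_le (Complex.I • T) hw0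
      (fun z => by simpa [inner_smul_right] using hw z) x
    have hI : (Complex.I • T) x + ((Complex.I • T)†) x = Complex.I • (T x - (T†) x) := by
      simp [map_smulₛₗ, sub_eq_add_neg]
    rwa [hI, norm_smul, Complex.norm_I, one_mul] at h
  have hpar := parallelogram_law_with_norm ℂ (T x) ((T†) x)
  rw [hx] at hpar
  have : ‖(T†) x‖ ^ 2 ≤ 0 := by nlinarith [norm_nonneg (T x + (T†) x), norm_nonneg (T x - (T†) x)]
  simpa using this

theorem span_setOf_norm_apply_eq_le_ker_adjoint (T : E →L[ℂ] E) {w : ℝ}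
    (hw : ∀ z, ‖⟪z, T z⟫_ℂ‖ ≤ w * ‖z‖ ^ 2) :
    Submodule.span ℂ {x | ‖T x‖ = 2 * w * ‖x‖} ≤ (T†).ker :=
  Submodule.span_le.mpr fun _ hx => adjoint_apply_eq_zero_of_norm_apply_eq T hw hx

end HalfRadial

theorem finrank_ker_adjoint {𝕜 F : Type*} [RCLike 𝕜] [NormedAddCommGroup F]
    [InnerProductSpace 𝕜 F] [CompleteSpace F] [FiniteDimensional 𝕜 F] (T : F →L[𝕜] F) :
    finrank 𝕜 (T†).ker = finrank 𝕜 T.ker := by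
  have h₁ := T.range.finrank_add_finrank_orthogonal
  have h₂ := LinearMap.finrank_range_add_finrank_ker (T : F →ₗ[𝕜] F)
  rw [← orthogonal_range]
  omega

theorem norm_inner_toCLM_le_numRadius {n : ℕ} (A : Matrix (Fin n) (Fin n) ℂ)
    (z : EuclideanSpace ℂ (Fin n)) : ‖⟪z, toCLM A z⟫_ℂ‖ ≤ numRadius A * ‖z‖ ^ 2 := by
  rcases eq_or_ne z 0 with rfl | hz
  · simp
  have hbdd : BddAbove
      {r : ℝ | ∃ z : EuclideanSpace ℂ (Fin n), ‖z‖ = 1 ∧ r = ‖⟪z, toCLM A z⟫_ℂ‖} := by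
    refine ⟨‖toCLM A‖, ?_⟩
    rintro r ⟨u, hu, rfl⟩
    simpa [hu] using (norm_inner_le_norm u _).trans
      (mul_le_mul_of_nonneg_left ((toCLM A).le_opNorm u) (norm_nonneg u))
  have hz' : 0 < ‖z‖ := norm_pos_iff.mpr hz
  set c : ℂ := ((‖z‖⁻¹ : ℝ) : ℂ)
  have hc : ‖c‖ = ‖z‖⁻¹ := by simp [c]
  have hunit : ‖c • z‖ = 1 := by rw [norm_smul, hc, inv_mul_cancel₀ hz'.ne']
  have hle := le_csSup hbdd ⟨c • z, hunit, rfl⟩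
  rw [map_smul, inner_smul_left, inner_smul_right, norm_mul, norm_mul, RCLike.norm_conj, hc,
    ← mul_assoc, ← mul_inv, ← sq, inv_mul_le_iff₀ (by positivity)] at hle
  rwa [mul_comm] at hle

theorem stmt10_general {n : ℕ} (A : Matrix (Fin n) (Fin n) ℂ)
    (h : opNorm A = 2 * numRadius A) :
    Module.finrank ℂ (Submodule.span ℂ
        {x : EuclideanSpace ℂ (Fin n) | ‖toCLM A x‖ = opNorm A * ‖x‖}) ≤
      Module.finrank ℂ (LinearMap.ker ((toCLM A : EuclideanSpace ℂ (Fin n) →ₗ[ℂ] EuclideanSpace ℂ (Fin n)))) := by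
  rw [h]
  calc _ ≤ finrank ℂ ((toCLM A)†).ker :=
        Submodule.finrank_mono
          (span_setOf_norm_apply_eq_le_ker_adjoint _ (norm_inner_toCLM_le_numRadius A))
    _ = _ := finrank_ker_adjoint _

theorem stmt10 {n : ℕ} (A : Matrix (Fin n) (Fin n) ℂ) (hA : A ≠ 0)
    (h : opNorm A = 2 * numRadius A) :
    Module.finrank ℂ (Submodule.span ℂ
        {x : EuclideanSpace ℂ (Fin n) | ‖toCLM A x‖ = opNorm A * ‖x‖}) ≤
      Module.finrank ℂ (LinearMap.ker ((toCLM A : EuclideanSpace ℂ (Fin n) →ₗ[ℂ] EuclideanSpace ℂ (Fin n)))) :=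
  stmt10_general A h
end

section
/- The 3×3 matrix A with entries A(3,1) = 1, A(2,2) = 0.9 and all other entries zero satisfies ‖A‖ = 1, U_max(A) ⊆ ker(A), V_max(A) ⊆ ker(A*), but r(A) ≥ 0.9 > 1/2, so A is not half-radial. -/
/-!
With `A = e₃ e₁* + c e₂ e₂*` and `|c| < 1` we have `A x = (0, c x₂, x₁)` and `A* x = (x₃, c̄ x₂, 0)`,
so `‖A x‖² = |x₁|² + |c|² |x₂|²` and `‖A* x‖² = |x₃|² + |c|² |x₂|²`. Hence `‖A‖ = 1`, attained only
on `span e₁ = ker A*` by `A` and only on `span e₃ = ker A` by `A*`, while `⟪e₂, A e₂⟫ = c` gives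
`r(A) ≥ |c|`, which exceeds `‖A‖ / 2` as soon as `|c| > 1/2`.
-/

open scoped InnerProductSpace

open scoped Matrix

lemma toCLM_apply {n : ℕ} (A : Matrix (Fin n) (Fin n) ℂ) (x : EuclideanSpace ℂ (Fin n)) :
    toCLM A x = WithLp.toLp 2 (A *ᵥ x.ofLp) :=
  rfl

lemma adjoint_toCLM {n : ℕ} (A : Matrix (Fin n) (Fin n) ℂ) :
    ContinuousLinearMap.adjoint (toCLM A) = toCLM Aᴴ := by
  rw [← ContinuousLinearMap.star_eq_adjoint]
  simp [toCLM, ← map_star, Matrix.star_eq_conjTranspose]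

lemma norm_inner_apply_le_numRadius {n : ℕ} (A : Matrix (Fin n) (Fin n) ℂ)
    {z : EuclideanSpace ℂ (Fin n)} (hz : ‖z‖ = 1) : ‖⟪z, toCLM A z⟫_ℂ‖ ≤ numRadius A := by
  refine le_csSup ⟨opNorm A, ?_⟩ ⟨z, hz, rfl⟩
  rintro r ⟨w, hw, rfl⟩
  calc ‖⟪w, toCLM A w⟫_ℂ‖ ≤ ‖w‖ * (‖toCLM A‖ * ‖w‖) :=
        (norm_inner_le_norm _ _).trans (by gcongr; exact (toCLM A).le_opNorm w)
    _ = opNorm A := by rw [hw, opNorm]; ring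

lemma norm_sq_fin_three (x : EuclideanSpace ℂ (Fin 3)) :
    ‖x‖ ^ 2 = ‖x 0‖ ^ 2 + ‖x 1‖ ^ 2 + ‖x 2‖ ^ 2 := by
  rw [EuclideanSpace.norm_sq_eq, Fin.sum_univ_three]

lemma norm_sq_vec_three (a b d : ℂ) : ‖!₂[a, b, d]‖ ^ 2 = ‖a‖ ^ 2 + ‖b‖ ^ 2 + ‖d‖ ^ 2 :=
  norm_sq_fin_three _

def cornerDiag (c : ℂ) : Matrix (Fin 3) (Fin 3) ℂ := !![0, 0, 0; 0, c, 0; 1, 0, 0]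

section cornerDiag

variable (c : ℂ)

lemma toCLM_cornerDiag_apply (x : EuclideanSpace ℂ (Fin 3)) :
    toCLM (cornerDiag c) x = !₂[0, c * x 1, x 0] := by
  ext i
  fin_cases i <;> simp [toCLM_apply, cornerDiag, dotProduct, Fin.sum_univ_three]

lemma adjoint_toCLM_cornerDiag_apply (x : EuclideanSpace ℂ (Fin 3)) :
    ContinuousLinearMap.adjoint (toCLM (cornerDiag c)) x = !₂[x 2, star c * x 1, 0] := by
  rw [adjoint_toCLM]
  ext i
  fin_cases i <;>
    simp [toCLM_apply, cornerDiag, Matrix.mulVec, dotProduct, Fin.sum_univ_three,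
      Matrix.conjTranspose_apply]

lemma norm_sq_toCLM_cornerDiag (x : EuclideanSpace ℂ (Fin 3)) :
    ‖toCLM (cornerDiag c) x‖ ^ 2 = ‖x 0‖ ^ 2 + ‖c‖ ^ 2 * ‖x 1‖ ^ 2 := by
  rw [toCLM_cornerDiag_apply, norm_sq_vec_three, norm_zero, norm_mul]
  ring

lemma norm_sq_adjoint_toCLM_cornerDiag (x : EuclideanSpace ℂ (Fin 3)) :
    ‖ContinuousLinearMap.adjoint (toCLM (cornerDiag c)) x‖ ^ 2 =
      ‖x 2‖ ^ 2 + ‖c‖ ^ 2 * ‖x 1‖ ^ 2 := by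
  rw [adjoint_toCLM_cornerDiag_apply, norm_sq_vec_three, norm_zero, norm_mul, norm_star]
  ring

lemma norm_le_numRadius_cornerDiag : ‖c‖ ≤ numRadius (cornerDiag c) := by
  have he : ‖(EuclideanSpace.single 1 1 : EuclideanSpace ℂ (Fin 3))‖ = 1 := by simp
  convert norm_inner_apply_le_numRadius (cornerDiag c) he using 2
  simp [toCLM_cornerDiag_apply, PiLp.inner_apply]

variable {c}

lemma opNorm_cornerDiag (hc : ‖c‖ ≤ 1) : opNorm (cornerDiag c) = 1 := by
  refine le_antisymm (ContinuousLinearMap.opNorm_le_bound _ zero_le_one fun x ↦ ?_) ?_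
  · rw [one_mul, ← pow_le_pow_iff_left₀ (norm_nonneg _) (norm_nonneg x) two_ne_zero,
      norm_sq_toCLM_cornerDiag, norm_sq_fin_three]
    have : ‖c‖ ^ 2 ≤ 1 := pow_le_one₀ (norm_nonneg c) hc
    nlinarith [sq_nonneg ‖x 1‖, sq_nonneg ‖x 2‖]
  · have he : ‖(EuclideanSpace.single 0 1 : EuclideanSpace ℂ (Fin 3))‖ = 1 := by simp
    calc (1 : ℝ) = ‖toCLM (cornerDiag c) (EuclideanSpace.single 0 1)‖ := by
          rw [eq_comm, ← pow_eq_one_iff_of_nonneg (norm_nonneg _) two_ne_zero,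
            norm_sq_toCLM_cornerDiag]
          simp
      _ ≤ opNorm (cornerDiag c) := (toCLM _).unit_le_opNorm _ he.le

lemma toCLM_cornerDiag_eq_zero_of_norm_adjoint_eq (hc : ‖c‖ < 1) {u : EuclideanSpace ℂ (Fin 3)}
    (hu : ‖ContinuousLinearMap.adjoint (toCLM (cornerDiag c)) u‖ = ‖u‖) :
    toCLM (cornerDiag c) u = 0 := by
  have hsq : ‖ContinuousLinearMap.adjoint (toCLM (cornerDiag c)) u‖ ^ 2 = ‖u‖ ^ 2 := by rw [hu]
  rw [norm_sq_adjoint_toCLM_cornerDiag, norm_sq_fin_three] at hsq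
  have : ‖c‖ ^ 2 < 1 := pow_lt_one₀ (norm_nonneg c) hc two_ne_zero
  have h0 : u 0 = 0 := by
    rw [← norm_eq_zero, ← sq_eq_zero_iff]; nlinarith [sq_nonneg ‖u 1‖]
  have h1 : u 1 = 0 := by
    rw [← norm_eq_zero, ← sq_eq_zero_iff]; nlinarith [sq_nonneg ‖u 0‖]
  ext i
  fin_cases i <;> simp [toCLM_cornerDiag_apply, h0, h1]

lemma adjoint_toCLM_cornerDiag_eq_zero_of_norm_eq (hc : ‖c‖ < 1) {v : EuclideanSpace ℂ (Fin 3)}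
    (hv : ‖toCLM (cornerDiag c) v‖ = ‖v‖) :
    ContinuousLinearMap.adjoint (toCLM (cornerDiag c)) v = 0 := by
  have hsq : ‖toCLM (cornerDiag c) v‖ ^ 2 = ‖v‖ ^ 2 := by rw [hv]
  rw [norm_sq_toCLM_cornerDiag, norm_sq_fin_three] at hsq
  have : ‖c‖ ^ 2 < 1 := pow_lt_one₀ (norm_nonneg c) hc two_ne_zero
  have h1 : v 1 = 0 := by
    rw [← norm_eq_zero, ← sq_eq_zero_iff]; nlinarith [sq_nonneg ‖v 2‖]
  have h2 : v 2 = 0 := by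
    rw [← norm_eq_zero, ← sq_eq_zero_iff]; nlinarith [sq_nonneg ‖v 1‖]
  ext i
  fin_cases i <;> simp [adjoint_toCLM_cornerDiag_apply, h1, h2]

end cornerDiag

theorem stmt11 (A : Matrix (Fin 3) (Fin 3) ℂ)
    (hAdef : A = !![0, 0, 0; 0, (0.9 : ℂ), 0; 1, 0, 0]) :
    opNorm A = 1 ∧
    (∀ u : EuclideanSpace ℂ (Fin 3), ‖ContinuousLinearMap.adjoint (toCLM A) u‖ = opNorm A * ‖u‖ →
      toCLM A u = 0) ∧
    (∀ v : EuclideanSpace ℂ (Fin 3), ‖toCLM A v‖ = opNorm A * ‖v‖ →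
      ContinuousLinearMap.adjoint (toCLM A) v = 0) ∧
    (0.9 : ℝ) ≤ numRadius A ∧ (1 : ℝ) / 2 < (0.9 : ℝ) ∧
    opNorm A ≠ 2 * numRadius A := by
  obtain rfl : A = cornerDiag 0.9 := hAdef
  have hnorm : ‖(0.9 : ℂ)‖ = 0.9 := by
    rw [show (0.9 : ℂ) = ((0.9 : ℝ) : ℂ) by norm_num, Complex.norm_real,
      Real.norm_of_nonneg (by norm_num)]
  have hc : ‖(0.9 : ℂ)‖ < 1 := by rw [hnorm]; norm_num
  have hop : opNorm (cornerDiag 0.9) = 1 := opNorm_cornerDiag hc.le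
  have hrad : (0.9 : ℝ) ≤ numRadius (cornerDiag 0.9) := hnorm ▸ norm_le_numRadius_cornerDiag _
  refine ⟨hop, fun u hu ↦ ?_, fun v hv ↦ ?_, hrad, by norm_num, by rw [hop]; intro h; linarith⟩
  · rw [hop, one_mul] at hu
    exact toCLM_cornerDiag_eq_zero_of_norm_adjoint_eq hc hu
  · rw [hop, one_mul] at hv
    exact adjoint_toCLM_cornerDiag_eq_zero_of_norm_eq hc hv
end
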